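/- arXiv:1611.02651 — 4 statements merged into one kernel-verified Lean document; each statement's English description precedes it below -/
import Mathlib

section
/- For all natural numbers m, n ≥ 1, the sum over all pairs (i,j) with 0 ≤ i ≤ m, 0 ≤ j ≤ n, and i+j even, of (-1)^j · 2^{-(δ_{i,0}+δ_{i,m}+δ_{j,0}+δ_{j,n})}, equals zero. Here δ denotes the Kronecker delta. -/
/-!
With the trapezoid-rule weights `w_N(k) = 2^{-(δ_{k0} + δ_{kN})}` the summand is
`(-1)^j w_m(i) w_n(j)`. Writing the parity constraint as the factor `(1 + (-1)^{i+j}) / 2` turns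
the sum into half of `(∑ w_m) (∑ (-1)^j w_n) + (∑ (-1)^i w_m) (∑ w_n)`, and for `N ≥ 1` the
alternating trapezoid sum `∑ (-1)^k w_N(k) = ∑_{k<N} ((-1)^k + (-1)^{k+1}) / 2` vanishes.
-/

open Finset

variable {K : Type*} [Field K]

def boundaryWeight (N k : ℕ) : K :=
  (2 : K) ^ (-((if k = 0 then 1 else 0) + (if k = N then 1 else 0) : ℤ))

theorem sum_range_succ_boundaryWeight_mul [NeZero (2 : K)] {N : ℕ} (hN : 1 ≤ N) (f : ℕ → K) :
    ∑ k ∈ range (N + 1), boundaryWeight N k * f k = ∑ k ∈ range N, (f k + f (k + 1)) / 2 := by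
  have hweight : ∀ k ∈ range (N + 1), boundaryWeight N k * f k =
      f k - (if k = 0 then f k / 2 else 0) - (if k = N then f k / 2 else 0) := by
    intro k _
    have hN0 : N ≠ 0 := by omega
    by_cases h0 : k = 0 <;> by_cases hNk : k = N <;> simp_all [boundaryWeight] <;>
      field_simp <;> ring
  have hfirst := sum_range_succ' f N
  have hlast := sum_range_succ f N
  rw [sum_congr rfl hweight, sum_sub_distrib, sum_sub_distrib, sum_ite_eq', sum_ite_eq',
    if_pos (by simp), if_pos (by simp), ← sum_div, sum_add_distrib]
  field_simp
  linear_combination hfirst + hlast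

theorem sum_range_succ_neg_one_pow_mul_boundaryWeight [NeZero (2 : K)] {N : ℕ} (hN : 1 ≤ N) :
    ∑ k ∈ range (N + 1), (-1 : K) ^ k * boundaryWeight N k = 0 := by
  simp_rw [mul_comm ((-1 : K) ^ _), sum_range_succ_boundaryWeight_mul hN, pow_succ]
  simp

theorem ite_mod_two_eq_zero_eq_mul [NeZero (2 : K)] (k : ℕ) (x : K) :
    (if k % 2 = 0 then x else 0) = (1 + (-1) ^ k) / 2 * x := by
  rcases Nat.even_or_odd k with hk | hk
  · rw [if_pos (Nat.even_iff.mp hk), hk.neg_one_pow]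
    field_simp
    ring
  · rw [if_neg (Nat.not_even_iff_odd.mpr hk ∘ Nat.even_iff.mpr), hk.neg_one_pow]
    simp

/-- Lemma on even lattice sums: for all `m, n ≥ 1`, the sum over all
pairs `(i,j)` with `0 ≤ i ≤ m`, `0 ≤ j ≤ n` and `i + j` even of
`(-1)^j · 2^{-(δ_{i0} + δ_{im} + δ_{j0} + δ_{jn})}` vanishes. -/
theorem even_lattice_sum_eq_zero (m n : ℕ) (hm : 1 ≤ m) (hn : 1 ≤ n) :
    ∑ p ∈ (Finset.range (m + 1) ×ˢ Finset.range (n + 1)).filter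
        (fun p => (p.1 + p.2) % 2 = 0),
      (-1 : ℚ) ^ p.2 *
        (2 : ℚ) ^ (-(((if p.1 = 0 then 1 else 0) + (if p.1 = m then 1 else 0) +
            (if p.2 = 0 then 1 else 0) + (if p.2 = n then 1 else 0) : ℤ))) = 0 := by
  have hweight : ∀ i j : ℕ, (2 : ℚ) ^ (-(((if i = 0 then 1 else 0) + (if i = m then 1 else 0) +
      (if j = 0 then 1 else 0) + (if j = n then 1 else 0) : ℤ))) =
      boundaryWeight m i * boundaryWeight n j := by
    intro i j
    rw [boundaryWeight, boundaryWeight, ← zpow_add₀ two_ne_zero]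
    congr 1
    ring
  have hparity : ∀ i j : ℕ, (if (i + j) % 2 = 0 then
      (-1 : ℚ) ^ j * (boundaryWeight m i * boundaryWeight n j) else 0) =
      (boundaryWeight m i * ((-1) ^ j * boundaryWeight n j) +
        (-1) ^ i * boundaryWeight m i * boundaryWeight n j) / 2 := by
    intro i j
    have hsign : ((-1 : ℚ) ^ j) * (-1) ^ j = 1 := by
      rw [← pow_add, ← two_mul, pow_mul, neg_one_sq, one_pow]
    rw [ite_mod_two_eq_zero_eq_mul, pow_add]
    linear_combination (-1 : ℚ) ^ i * boundaryWeight m i * boundaryWeight n j / 2 * hsign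
  simp_rw [sum_filter, hweight, hparity, ← sum_div, sum_add_distrib, sum_product, ← sum_mul_sum,
    sum_range_succ_neg_one_pow_mul_boundaryWeight hm,
    sum_range_succ_neg_one_pow_mul_boundaryWeight hn]
  simp
end

section
/- For all natural numbers m, n ≥ 1, the sum over all pairs (i,j) with 0 ≤ i ≤ m, 0 ≤ j ≤ n, and i+j odd, of (-1)^j · 2^{-(δ_{i,0}+δ_{i,m}+δ_{j,0}+δ_{j,n})}, equals zero. -/
/-!
Write `w k i = 2 ^ -(δ_{i0} + δ_{ik})` for the trapezoidal weights on `0, …, k`. The summand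
factors as `w m i · (-1)^j w n j`, and the parity constraint is the factor `(1 - (-1)^(i+j)) / 2`.
The lattice sum therefore becomes a combination of products of one-dimensional sums, each of which
contains an alternating trapezoidal sum `∑ (-1)^i w k i`; for `k ≥ 1` that vanishes, because the
two halved endpoints make up for the imbalance of `∑_{i ≤ k} (-1)^i`.
-/

open Finset

def endpointWeight (k i : ℕ) : ℚ :=
  2 ^ (-((if i = 0 then 1 else 0) + (if i = k then 1 else 0) : ℤ))

lemma sum_neg_one_pow_mul_endpointWeight {k : ℕ} (hk : 1 ≤ k) :
    ∑ i ∈ range (k + 1), (-1 : ℚ) ^ i * endpointWeight k i = 0 := by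
  obtain ⟨l, rfl⟩ := Nat.exists_eq_add_of_le' hk
  have interior : ∑ i ∈ range l, (-1 : ℚ) ^ (i + 1) * endpointWeight (l + 1) (i + 1) =
      -∑ i ∈ range l, (-1 : ℚ) ^ i := by
    rw [← sum_neg_distrib]
    refine sum_congr rfl fun i hi => ?_
    simp [endpointWeight, (mem_range.mp hi).ne, pow_succ]
  rw [sum_range_succ, sum_range_succ', interior, neg_one_geom_sum]
  rcases Nat.even_or_odd l with hl | hl
  · simp [endpointWeight, hl, pow_succ, hl.neg_one_pow]
  · simp [endpointWeight, Nat.not_even_iff_odd.mpr hl, pow_succ, hl.neg_one_pow]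
    norm_num

lemma two_mul_ite_odd_add {R : Type*} [CommRing R] (i j : ℕ) (x y : R) :
    2 * (if (i + j) % 2 = 1 then x * y else 0) = x * y - (-1) ^ i * x * ((-1) ^ j * y) := by
  have hsign : (-1 : R) ^ i * (-1) ^ j = (-1) ^ (i + j) := (pow_add _ _ _).symm
  rcases Nat.even_or_odd (i + j) with h | h
  · rw [h.neg_one_pow] at hsign
    rw [if_neg (by simp [Nat.even_iff.mp h])]
    linear_combination x * y * hsign
  · rw [h.neg_one_pow] at hsign
    rw [if_pos (Nat.odd_iff.mp h)]
    linear_combination x * y * hsign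

lemma two_mul_sum_filter_odd_add {R : Type*} [CommRing R] (s t : Finset ℕ) (f g : ℕ → R) :
    2 * ∑ p ∈ (s ×ˢ t).filter (fun p => (p.1 + p.2) % 2 = 1), f p.1 * g p.2 =
      (∑ i ∈ s, f i) * ∑ j ∈ t, g j -
        (∑ i ∈ s, (-1) ^ i * f i) * ∑ j ∈ t, (-1) ^ j * g j := by
  rw [sum_mul_sum, sum_mul_sum, sum_filter, mul_sum, sum_product, ← sum_sub_distrib]
  simp only [two_mul_ite_odd_add, sum_sub_distrib]

lemma endpointWeight_mul_endpointWeight (m n i j : ℕ) :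
    endpointWeight m i * endpointWeight n j =
      2 ^ (-((if i = 0 then 1 else 0) + (if i = m then 1 else 0) +
        (if j = 0 then 1 else 0) + (if j = n then 1 else 0) : ℤ)) := by
  rw [endpointWeight, endpointWeight, ← zpow_add₀ two_ne_zero]
  ring_nf

/-- Lemma on even lattice sums: for all `m, n ≥ 1`, the sum over all
pairs `(i,j)` with `0 ≤ i ≤ m`, `0 ≤ j ≤ n` and `i + j` odd of
`(-1)^j · 2^{-(δ_{i0} + δ_{im} + δ_{j0} + δ_{jn})}` vanishes. -/
theorem odd_lattice_sum_eq_zero (m n : ℕ) (hm : 1 ≤ m) (hn : 1 ≤ n) :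
    ∑ p ∈ (Finset.range (m + 1) ×ˢ Finset.range (n + 1)).filter
        (fun p => (p.1 + p.2) % 2 = 1),
      (-1 : ℚ) ^ p.2 *
        (2 : ℚ) ^ (-(((if p.1 = 0 then 1 else 0) + (if p.1 = m then 1 else 0) +
            (if p.2 = 0 then 1 else 0) + (if p.2 = n then 1 else 0) : ℤ))) = 0 := by
  have factor : ∀ i j : ℕ, (-1 : ℚ) ^ j *
      (2 : ℚ) ^ (-(((if i = 0 then 1 else 0) + (if i = m then 1 else 0) +
        (if j = 0 then 1 else 0) + (if j = n then 1 else 0) : ℤ))) =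
      endpointWeight m i * ((-1) ^ j * endpointWeight n j) := fun i j => by
    rw [mul_left_comm, endpointWeight_mul_endpointWeight]
  have hdouble := two_mul_sum_filter_odd_add (range (m + 1)) (range (n + 1))
    (endpointWeight m) (fun j => (-1 : ℚ) ^ j * endpointWeight n j)
  rw [sum_neg_one_pow_mul_endpointWeight hn, sum_neg_one_pow_mul_endpointWeight hm] at hdouble
  simp only [factor]
  linarith
end

section
/- Let H : ℝⁿ → ℝ be smooth, J ∈ ℝ^{n×n} skew-symmetric, f₁ = J∇H, f₂(x) = f₁'(x)f₁(x), and set H₂(x) = -(2/3)·H^{(2)}(x)(f₁(x), f₁(x)). Then for all x: H₂^{(1)}(x)[f₁(x)] = -( H^{(1)}(x)[f₃(x)] + 2 H^{(2)}(x)[f₁(x), f₂(x)] + (2/3) H^{(3)}(x)[f₁(x), f₁(x), f₁(x)] ), where f₃(x) = f₁'(x) f₂(x). -/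
/-- The gradient of `H` in the standard coordinates of `ℝⁿ`. -/
noncomputable def grad {n : ℕ} (H : (Fin n → ℝ) → ℝ) (x : Fin n → ℝ) : Fin n → ℝ :=
  fun i => fderiv ℝ H x (Pi.single i 1)

/-- `fseq f k x = (f'(x))^(k-1) f(x)`, i.e. `fseq f 1 = f` and
`fseq f (k+1) x = f'(x) (fseq f k x)`. -/
noncomputable def fseq {n : ℕ} (f : (Fin n → ℝ) → (Fin n → ℝ)) :
    ℕ → (Fin n → ℝ) → (Fin n → ℝ)
  | 0, x => f x
  | 1, x => f x
  | (k + 2), x => fderiv ℝ f x (fseq f (k + 1) x)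

open Matrix



variable {n : ℕ}

/-- dot product with a fixed right vector, as a CLM -/
noncomputable def dotCLM (w : Fin n → ℝ) : (Fin n → ℝ) →L[ℝ] ℝ :=
  LinearMap.toContinuousLinearMap
    { toFun := fun v => v ⬝ᵥ w
      map_add' := fun a b => add_dotProduct a b w
      map_smul' := fun c a => smul_dotProduct c a w }

@[simp] lemma dotCLM_apply (w v : Fin n → ℝ) : dotCLM w v = v ⬝ᵥ w := rfl

lemma clm_eq_dot (L : (Fin n → ℝ) →L[ℝ] ℝ) (v : Fin n → ℝ) :
    L v = (fun i => L (Pi.single i 1)) ⬝ᵥ v := by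
  have hv : v = ∑ i, (v i) • (Pi.single i 1 : Fin n → ℝ) := by
    funext j
    simp [Pi.single_apply, Finset.sum_apply]
  conv_lhs => rw [hv]
  rw [map_sum]
  simp [dotProduct, mul_comm]

lemma skew_dot (J : Matrix (Fin n) (Fin n) ℝ) (hJ : J.transpose = -J) (u w : Fin n → ℝ) :
    u ⬝ᵥ J.mulVec w = -(J.mulVec u ⬝ᵥ w) := by
  rw [Matrix.dotProduct_mulVec, ← Matrix.mulVec_transpose, hJ]
  rw [Matrix.neg_mulVec, neg_dotProduct]

lemma skew_quad (J : Matrix (Fin n) (Fin n) ℝ) (hJ : J.transpose = -J) (u : Fin n → ℝ) :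
    u ⬝ᵥ J.mulVec u = 0 := by
  have h := skew_dot J hJ u u
  have h2 : J.mulVec u ⬝ᵥ u = u ⬝ᵥ J.mulVec u := dotProduct_comm _ _
  rw [h2] at h
  linarith

lemma contDiff_grad {H : (Fin n → ℝ) → ℝ} (hH : ContDiff ℝ (⊤ : ℕ∞) H) :
    ContDiff ℝ (⊤ : ℕ∞) (grad H) := by
  apply contDiff_pi.2
  intro i
  exact (hH.fderiv_right (by exact_mod_cast le_top)).clm_apply contDiff_const

lemma grad_test {H : (Fin n → ℝ) → ℝ} (hH : ContDiff ℝ (⊤ : ℕ∞) H) :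
    ContDiff ℝ (⊤ : ℕ∞) (fun x => fderiv ℝ H x) := by
  exact hH.fderiv_right (by exact_mod_cast le_top)

section main
variable {H : (Fin n → ℝ) → ℝ} {J : Matrix (Fin n) (Fin n) ℝ} {f : (Fin n → ℝ) → (Fin n → ℝ)}

lemma contDiff_f (hH : ContDiff ℝ (⊤ : ℕ∞) H) (hf : ∀ x, f x = J.mulVec (grad H x)) :
    ContDiff ℝ (⊤ : ℕ∞) f := by
  have : f = fun x => (LinearMap.toContinuousLinearMap (Matrix.mulVecLin J)) (grad H x) := by
    funext x; simpa using hf x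
  rw [this]
  exact (LinearMap.toContinuousLinearMap (Matrix.mulVecLin J)).contDiff.comp (contDiff_grad hH)

/-- `fderiv H x v = grad H x ⬝ᵥ v` -/
lemma fderiv_eq_grad_dot (x v : Fin n → ℝ) : fderiv ℝ H x v = grad H x ⬝ᵥ v :=
  clm_eq_dot (fderiv ℝ H x) v

/-- derivative of f -/
lemma fderiv_f (hH : ContDiff ℝ (⊤ : ℕ∞) H) (hf : ∀ x, f x = J.mulVec (grad H x))
    (x w : Fin n → ℝ) :
    fderiv ℝ f x w = J.mulVec (fderiv ℝ (grad H) x w) := by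
  have hgrad : HasFDerivAt (grad H) (fderiv ℝ (grad H) x) x :=
    ((contDiff_grad hH).differentiable (by simp)).differentiableAt.hasFDerivAt
  have hcomp : HasFDerivAt f
      ((LinearMap.toContinuousLinearMap (Matrix.mulVecLin J)).comp (fderiv ℝ (grad H) x)) x := by
    have : f = fun y => (LinearMap.toContinuousLinearMap (Matrix.mulVecLin J)) (grad H y) := by
      funext y; simpa using hf y
    rw [this]
    exact ((LinearMap.toContinuousLinearMap (Matrix.mulVecLin J)).hasFDerivAt).comp x hgrad
  rw [hcomp.fderiv]
  simp

/-- second derivative as bilinear = dot with gradient-derivative -/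
lemma sndFDeriv_eq_dot (hH : ContDiff ℝ (⊤ : ℕ∞) H) (x v w : Fin n → ℝ) :
    fderiv ℝ (fderiv ℝ H) x v w = fderiv ℝ (grad H) x v ⬝ᵥ w := by
  have hgrad : HasFDerivAt (grad H) (fderiv ℝ (grad H) x) x :=
    ((contDiff_grad hH).differentiable (by simp)).differentiableAt.hasFDerivAt
  have hfd : HasFDerivAt (fderiv ℝ H) (fderiv ℝ (fderiv ℝ H) x) x :=
    (((hH.fderiv_right (m := (⊤:ℕ∞)) (by exact_mod_cast le_top)) :
      ContDiff ℝ (⊤:ℕ∞) (fderiv ℝ H)).differentiable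
      (by simp)).differentiableAt.hasFDerivAt
  have h1 : HasFDerivAt (fun y => grad H y ⬝ᵥ w) ((dotCLM w).comp (fderiv ℝ (grad H) x)) x :=
    ((dotCLM w).hasFDerivAt).comp x hgrad
  have h2 : HasFDerivAt (fun y => fderiv ℝ H y w)
      ((fderiv ℝ H x).comp (0 : (Fin n → ℝ) →L[ℝ] (Fin n → ℝ))
        + (fderiv ℝ (fderiv ℝ H) x).flip w) x :=
    hfd.clm_apply (hasFDerivAt_const w x)
  have he : (fun y => fderiv ℝ H y w) = fun y => grad H y ⬝ᵥ w := by
    funext y; exact fderiv_eq_grad_dot y w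
  rw [he] at h2
  have := h1.unique h2
  have hv := congrArg (fun L => L v) this
  simpa using hv.symm

end main

section main2
variable {H : (Fin n → ℝ) → ℝ} {J : Matrix (Fin n) (Fin n) ℝ} {f : (Fin n → ℝ) → (Fin n → ℝ)}

lemma smooth_fderiv {F : Type*} [NormedAddCommGroup F] [NormedSpace ℝ F]
    {g : (Fin n → ℝ) → F} (h : ContDiff ℝ (⊤ : ℕ∞) g) :
    ContDiff ℝ (⊤ : ℕ∞) (fderiv ℝ g) :=
  (h.fderiv_right (m := (⊤ : ℕ∞)) (by exact_mod_cast le_top))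

lemma hasFDerivAt_of_smooth {F : Type*} [NormedAddCommGroup F] [NormedSpace ℝ F]
    {g : (Fin n → ℝ) → F} (h : ContDiff ℝ (⊤ : ℕ∞) g) (x : Fin n → ℝ) :
    HasFDerivAt g (fderiv ℝ g x) x :=
  ((h.differentiable (by simp)) x).hasFDerivAt

lemma thirdDeriv_eq (hH : ContDiff ℝ (⊤ : ℕ∞) H) (x a b c : Fin n → ℝ) :
    iteratedFDeriv ℝ 3 H x ![a, b, c] = fderiv ℝ (fderiv ℝ (fderiv ℝ H)) x a b c := by
  have hd2 : DifferentiableAt ℝ (iteratedFDeriv ℝ 2 H) x := by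
    apply (hH.differentiable_iteratedFDeriv (m := 2) ?_).differentiableAt
    exact WithTop.coe_lt_coe.2 (lt_top_iff_ne_top.2 (by simp))
  have key := fderiv_continuousMultilinear_apply_const_apply hd2 (![b, c]) a
  have he : (fun y => iteratedFDeriv ℝ 2 H y ![b, c]) = fun y => fderiv ℝ (fderiv ℝ H) y b c := by
    funext y
    rw [iteratedFDeriv_two_apply]
    simp
  have hA := hasFDerivAt_of_smooth (smooth_fderiv (smooth_fderiv hH)) x
  have h1 : HasFDerivAt (fun y => fderiv ℝ (fderiv ℝ H) y b)
      ((fderiv ℝ (fderiv ℝ H) x).comp (0 : (Fin n → ℝ) →L[ℝ] (Fin n → ℝ))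
        + (fderiv ℝ (fderiv ℝ (fderiv ℝ H)) x).flip b) x :=
    hA.clm_apply (hasFDerivAt_const b x)
  have h2 := h1.clm_apply (hasFDerivAt_const c x)
  have h3 : iteratedFDeriv ℝ 3 H x ![a, b, c]
      = (fderiv ℝ (iteratedFDeriv ℝ 2 H) x) a (Fin.tail ![a, b, c]) := by
    exact iteratedFDeriv_succ_apply_left (n := 2) ![a, b, c]
  have h4 : Fin.tail ![a, b, c] = ![b, c] := by
    funext i; fin_cases i <;> rfl
  rw [h3, h4, ← key, he, h2.fderiv]
  simp

lemma fderiv_phi (hH : ContDiff ℝ (⊤ : ℕ∞) H) (hfs : ContDiff ℝ (⊤ : ℕ∞) f) (x : Fin n → ℝ) :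
    fderiv ℝ (fun y => fderiv ℝ (fderiv ℝ H) y (f y) (f y)) x (f x)
      = fderiv ℝ (fderiv ℝ (fderiv ℝ H)) x (f x) (f x) (f x)
        + fderiv ℝ (fderiv ℝ H) x (fderiv ℝ f x (f x)) (f x)
        + fderiv ℝ (fderiv ℝ H) x (f x) (fderiv ℝ f x (f x)) := by
  have hA := hasFDerivAt_of_smooth (smooth_fderiv (smooth_fderiv hH)) x
  have hfx := hasFDerivAt_of_smooth hfs x
  have h1 := hA.clm_apply hfx
  have h2 := h1.clm_apply hfx
  rw [h2.fderiv]
  simp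
  ring

end main2

/-- the order-`ε³` equation: with `f₁ = J∇H`, `f₂ = f₁'f₁`, `f₃ = f₁'f₂`
and `H₂(x) = -(2/3)·H''(x)(f₁(x),f₁(x))`, one has
`H₂'(x)[f₁(x)] = -(H'(x)[f₃(x)] + 2H''(x)[f₁(x),f₂(x)] + (2/3)H'''(x)[f₁(x),f₁(x),f₁(x)])`. -/
theorem order_eps3_equation {n : ℕ} (H : (Fin n → ℝ) → ℝ)
    (J : Matrix (Fin n) (Fin n) ℝ) (hH : ContDiff ℝ (⊤ : ℕ∞) H) (hJ : J.transpose = -J)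
    (f : (Fin n → ℝ) → (Fin n → ℝ)) (hf : ∀ x, f x = J.mulVec (grad H x))
    (H₂ : (Fin n → ℝ) → ℝ)
    (hH₂ : ∀ x, H₂ x = -(2/3) * iteratedFDeriv ℝ 2 H x ![fseq f 1 x, fseq f 1 x])
    (x : Fin n → ℝ) :
    fderiv ℝ H₂ x (fseq f 1 x) =
      -(fderiv ℝ H x (fseq f 3 x)
        + 2 * iteratedFDeriv ℝ 2 H x ![fseq f 1 x, fseq f 2 x]
        + (2/3) * iteratedFDeriv ℝ 3 H x ![fseq f 1 x, fseq f 1 x, fseq f 1 x]) := by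
  have hH' : ContDiff ℝ (⊤ : ℕ∞) H := hH.of_le (by simp)
  have hfs : ContDiff ℝ (⊤ : ℕ∞) f := contDiff_f hH' hf
  have h1x : fseq f 1 x = f x := rfl
  have h2x : fseq f 2 x = fderiv ℝ f x (f x) := rfl
  have h3x : fseq f 3 x = fderiv ℝ f x (fseq f 2 x) := rfl
  -- symmetry of the second derivative
  have hsymm : ∀ a b, fderiv ℝ (fderiv ℝ H) x a b = fderiv ℝ (fderiv ℝ H) x b a := by
    intro a b
    exact (hH'.contDiffAt.isSymmSndFDerivAt (by rw [minSmoothness_of_isRCLikeNormedField]; exact WithTop.coe_le_coe.2 (le_top : (2 : ℕ∞) ≤ ⊤))) a b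
  -- the second fseq in terms of the gradient derivative
  have hf2 : fseq f 2 x = J.mulVec (fderiv ℝ (grad H) x (f x)) := by
    rw [h2x, fderiv_f hH' hf]
  -- vanishing of H''(f₁, f₂)
  have hzero1 : fderiv ℝ (fderiv ℝ H) x (f x) (fseq f 2 x) = 0 := by
    rw [sndFDeriv_eq_dot hH', hf2]
    exact skew_quad J hJ _
  have hzero2 : fderiv ℝ (fderiv ℝ H) x (fseq f 2 x) (f x) = 0 := by
    rw [hsymm]; exact hzero1
  -- vanishing of H'(f₃)
  have hzero3 : fderiv ℝ H x (fseq f 3 x) = 0 := by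
    rw [h3x, fderiv_f hH' hf, fderiv_eq_grad_dot, skew_dot J hJ, ← hf x,
      dotProduct_comm, ← sndFDeriv_eq_dot hH', hzero2, neg_zero]
  -- second iterated derivative as bilinear map
  have conv2 : ∀ a b : Fin n → ℝ, iteratedFDeriv ℝ 2 H x ![a, b]
      = fderiv ℝ (fderiv ℝ H) x a b := by
    intro a b; rw [iteratedFDeriv_two_apply]; simp
  -- rewrite H₂
  have hH₂' : H₂ = fun y => -(2/3) * fderiv ℝ (fderiv ℝ H) y (f y) (f y) := by
    funext y
    rw [hH₂ y, iteratedFDeriv_two_apply]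
    simp only [Matrix.cons_val_zero, Matrix.cons_val_one, Matrix.head_cons]
    rfl
  -- differentiability of the bilinear application
  have hA := hasFDerivAt_of_smooth (smooth_fderiv (smooth_fderiv hH')) x
  have hfx := hasFDerivAt_of_smooth hfs x
  have hφ : DifferentiableAt ℝ (fun y => fderiv ℝ (fderiv ℝ H) y (f y) (f y)) x :=
    ((hA.clm_apply hfx).clm_apply hfx).differentiableAt
  have hL : fderiv ℝ H₂ x (fseq f 1 x)
      = -(2/3) * fderiv ℝ (fun y => fderiv ℝ (fderiv ℝ H) y (f y) (f y)) x (f x) := by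
    rw [h1x, hH₂', fderiv_const_mul hφ, ContinuousLinearMap.smul_apply, smul_eq_mul]
  rw [hL, fderiv_phi hH' hfs, hzero3, h1x, conv2, thirdDeriv_eq hH', hzero1, ← h2x, hzero2, hzero1]
  ring
end

section
/- Let f : ℝⁿ → ℝⁿ be a vector field with quadratic components, i.e., f(x) = Q(x) + Bx + c where each component of Q is a quadratic form, B is a matrix and c a vector. If x̃ satisfies the Kahan discretization equation (x̃ - x)/(2ε) = Q(x, x̃) + (1/2)B(x + x̃) + c, with Q(x,x̃) = (1/2)(Q(x+x̃) - Q(x) - Q(x̃)) the polarization of Q, and if the matrix I - ε f'(x) is invertible, then x̃ = x + 2ε (I - ε f'(x))^{-1} f(x). -/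
/-!
The Kahan equation is linear in the increment `v = y - x`: by bilinearity of the polarization,
`Q(x, x + v) + (1/2) B (2x + v) + c = f(x) + (1/2) f'(x) v`, because `f'(x) v = 2 Q(x, v) + B v`.
Hence `(I - ε f'(x)) v = 2ε f(x)`, and `v` is recovered by inverting `I - ε f'(x)`.
-/

/-- The Jacobian matrix `f'(x)` of a map `f : ℝⁿ → ℝⁿ` in standard coordinates. -/
noncomputable def jacobian {n : ℕ} (f : (Fin n → ℝ) → (Fin n → ℝ)) (x : Fin n → ℝ) :
    Matrix (Fin n) (Fin n) ℝ :=
  Matrix.of fun i j => fderiv ℝ f x (Pi.single j 1) i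

open Matrix

theorem jacobian_eq_toMatrix' {n : ℕ} (f : (Fin n → ℝ) → (Fin n → ℝ)) (x : Fin n → ℝ) :
    jacobian f x = LinearMap.toMatrix' (fderiv ℝ f x : (Fin n → ℝ) →ₗ[ℝ] (Fin n → ℝ)) := by
  ext i j
  simp [jacobian, LinearMap.toMatrix'_apply]

theorem HasFDerivAt.jacobian_mulVec {n : ℕ} {f : (Fin n → ℝ) → (Fin n → ℝ)}
    {D : (Fin n → ℝ) →L[ℝ] (Fin n → ℝ)} {x : Fin n → ℝ} (h : HasFDerivAt f D x)
    (v : Fin n → ℝ) : jacobian f x *ᵥ v = D v := by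
  rw [jacobian_eq_toMatrix', LinearMap.toMatrix'_mulVec, h.fderiv, ContinuousLinearMap.coe_coe]

theorem ContinuousLinearMap.hasFDerivAt_diag {𝕜 E F : Type*} [NontriviallyNormedField 𝕜]
    [NormedAddCommGroup E] [NormedSpace 𝕜 E] [NormedAddCommGroup F] [NormedSpace 𝕜 F]
    (b : E →L[𝕜] E →L[𝕜] F) (x : E) :
    HasFDerivAt (fun z => b z z) (b x + b.flip x) x := by
  refine (b.hasFDerivAt_of_bilinear (hasFDerivAt_id x) (hasFDerivAt_id x)).congr_fderiv ?_
  ext v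
  simp

theorem isBilinearMap_dotProduct_mulVec {ι m R : Type*} [Fintype m] [CommRing R]
    (A : ι → Matrix m m R) : IsBilinearMap R (fun z w i => z ⬝ᵥ A i *ᵥ w) where
  add_left _ _ _ := by ext; simp [add_dotProduct]
  smul_left _ _ _ := by ext; simp [smul_dotProduct]
  add_right _ _ _ := by ext; simp [mulVec_add, dotProduct_add]
  smul_right _ _ _ := by ext; simp [mulVec_smul, dotProduct_smul]

theorem kahan_increment_sub_smul_deriv {𝕜 E : Type*} [Field 𝕜] [CharZero 𝕜] [AddCommGroup E]
    [Module 𝕜 E] (b : E →ₗ[𝕜] E →ₗ[𝕜] E) (L : E →ₗ[𝕜] E) (c : E) (ε : 𝕜) (x y : E)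
    (h : y - x = (2 * ε) •
      ((1/2 : 𝕜) • (b (x + y) (x + y) - b x x - b y y) + (1/2 : 𝕜) • L (x + y) + c)) :
    (y - x) - ε • (b x (y - x) + b (y - x) x + L (y - x)) = (2 * ε) • (b x x + L x + c) := by
  obtain ⟨v, rfl⟩ : ∃ v, y = x + v := ⟨y - x, by abel⟩
  rw [add_sub_cancel_left] at h ⊢
  nth_rw 1 [h]
  simp only [map_add, LinearMap.add_apply]
  module

/-- explicit form of the Kahan map: let `f(x) = Q(x) + Bx + c` with each
component of `Q` a quadratic form. If `y` satisfies the Kahan discretization equation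
`(y - x)/(2ε) = Q(x,y) + (1/2)B(x+y) + c`, with `Q(x,y) = (1/2)(Q(x+y) - Q(x) - Q(y))`,
and `I - ε f'(x)` is invertible, then `y = x + 2ε (I - ε f'(x))⁻¹ f(x)`. -/
theorem kahan_explicit_form {n : ℕ}
    (Q : (Fin n → ℝ) → (Fin n → ℝ)) (B : Matrix (Fin n) (Fin n) ℝ) (c : Fin n → ℝ)
    (hQ : ∃ A : Fin n → Matrix (Fin n) (Fin n) ℝ,
      ∀ x i, Q x i = dotProduct x ((A i).mulVec x))
    (f : (Fin n → ℝ) → (Fin n → ℝ)) (hf : ∀ x, f x = Q x + B.mulVec x + c)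
    (ε : ℝ) (x y : Fin n → ℝ)
    (hkahan : y - x = (2 * ε) •
      ((1/2 : ℝ) • (Q (x + y) - Q x - Q y) + (1/2 : ℝ) • B.mulVec (x + y) + c))
    (hinv : IsUnit (1 - ε • jacobian f x)) :
    y = x + (2 * ε) • (1 - ε • jacobian f x)⁻¹.mulVec (f x) := by
  obtain ⟨A, hA⟩ := hQ
  have hb := isBilinearMap_dotProduct_mulVec A
  set b := hb.toContinuousBilinearMap
  set L := LinearMap.toContinuousLinearMap B.mulVecLin
  have hQb : ∀ z, Q z = b z z := fun z => funext (hA z)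
  have hfb : f = fun z => b z z + L z + c := funext fun z => by rw [hf, hQb]; rfl
  have hder : HasFDerivAt f (b x + b.flip x + L) x := by
    rw [hfb]
    exact ((b.hasFDerivAt_diag x).add L.hasFDerivAt).add_const c
  have key : (1 - ε • jacobian f x) *ᵥ (y - x) = (2 * ε) • f x := by
    rw [sub_mulVec, one_mulVec, smul_mulVec, hder.jacobian_mulVec, hfb]
    exact kahan_increment_sub_smul_deriv hb.toLinearMap B.mulVecLin c ε x y
      (by simp only [hQb] at hkahan; exact hkahan)
  let _ := hinv.invertible
  rw [← mulVec_smul, ← key, inv_mulVec_eq_vec rfl, add_sub_cancel]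
end
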